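/- arXiv:2212.00927 — 7 statements merged into one kernel-verified Lean document; each statement's English description precedes it below -/
import Mathlib

section
/- Switching subgradient method convergence (Theorem 1). Let Z ⊆ ℝ^d be nonempty, closed and convex, let μ > 0, τ > 0, L₀ ≥ 0, L₁ ≥ 0, and let F, G : ℝ^d → ℝ be convex on Z. Let z* ∈ Z satisfy G(z*) ≤ 0. Define step sizes α_t = 2/(μ(t+2) + L₁²/(μ(t+1))). Suppose sequences z : ℕ → Z and ζ : ℕ → ℝ^d satisfy z₀ ∈ Z with G(z₀) ≤ τ and, for every t ∈ ℕ: if G(z_t) ≤ τ then ζ_t is a μ-strong subgradient of F at z_t over Z with ‖ζ_t‖² ≤ L₀² + L₁(F(z_t) − F(z*)), while if G(z_t) > τ then ζ_t is a μ-strong subgradient of G at z_t over Z with ‖ζ_t‖² ≤ L₀² + L₁(G(z_t) − G(z*)); and z_{t+1} = proj_Z(z_t − α_t ζ_t). Then for every natural number T ≥ 1 with T ≥ 8L₀²/(μτ) and T ≥ sqrt(2L₁²‖z₀ − z*‖²/(μτ)), the index set I = {t : t < T, G(z_t) ≤ τ} contains 0, and the weighted average z̄_T = (Σ_{t∈I}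 (t+1) z_t)/(Σ_{t∈I} (t+1)) satisfies F(z̄_T) − F(z*) ≤ τ and G(z̄_T) ≤ τ. -/
open RealInnerProductSpace Finset

/-!
Write `r_t = ‖z_t - z*‖²` and `Δ_t` for the gap `h(z_t) - h(z*)` of the function `h ∈ {F, G}` used at
step `t`. Strong convexity and nonexpansiveness of the projection give
`α_t (2 - α_t L₁) Δ_t ≤ (1 - μ α_t) r_t - r_{t+1} + α_t² L₀²`. The step size makes
`q_t (1 - μ α_t) = q_{t-1}` for `q_t = μ² (t+1)(t+2) + L₁²`, so after multiplying by
`q_t / (2 μ σ_t)`, with a nondecreasing damping factor `1 ≤ σ_t ≤ 2 - α_t L₁`, the inequalities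
telescope to `∑_{t<T} (t+1) Δ_t ≤ L₁² r_0 / (2μ) + 2 T L₀² / μ ≤ τ ∑_{t<T} (t+1)`. As `Δ_t > τ`
at the steps on `G`, the `(t+1)`-weighted average of `Δ_t` over the steps on `F` is at most `τ`, and
Jensen's inequality passes both bounds to the averaged point.
-/

section Geometry

variable {E : Type*} [NormedAddCommGroup E] [InnerProductSpace ℝ E]

lemma norm_sub_sq_le_of_inner_le_zero {w p y : E} (h : ⟪w - p, y - p⟫ ≤ 0) :
    ‖p - y‖ ^ 2 ≤ ‖w - y‖ ^ 2 := by
  have hsplit : w - y = (w - p) - (y - p) := by abel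
  rw [hsplit, norm_sub_sq_real (w - p), norm_sub_rev y p]
  nlinarith [sq_nonneg ‖w - p‖]

lemma sub_add_le_inner_of_strong_subgradient {h : E → ℝ} {x y ζ : E} {μ : ℝ}
    (hζ : h y ≥ h x + ⟪ζ, y - x⟫ + μ / 2 * ‖y - x‖ ^ 2) :
    h x - h y + μ / 2 * ‖x - y‖ ^ 2 ≤ ⟪ζ, x - y⟫ := by
  rw [← neg_sub x y, inner_neg_right, norm_neg] at hζ
  linarith

lemma projected_step_gap_le {x x' g y : E} {a μ D L0 L1 : ℝ} (ha : 0 ≤ a)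
    (hproj : ⟪(x - a • g) - x', y - x'⟫ ≤ 0)
    (hsub : D + μ / 2 * ‖x - y‖ ^ 2 ≤ ⟪g, x - y⟫)
    (hg : ‖g‖ ^ 2 ≤ L0 ^ 2 + L1 * D) :
    a * (2 - a * L1) * D ≤ (1 - μ * a) * ‖x - y‖ ^ 2 - ‖x' - y‖ ^ 2 + a ^ 2 * L0 ^ 2 := by
  have hexpand : ‖(x - a • g) - y‖ ^ 2 = ‖x - y‖ ^ 2 - 2 * a * ⟪g, x - y⟫ + a ^ 2 * ‖g‖ ^ 2 := by
    rw [sub_right_comm, norm_sub_sq_real, real_inner_smul_right, norm_smul, mul_pow,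
      Real.norm_eq_abs, sq_abs, real_inner_comm]
    ring
  have hnonexp := norm_sub_sq_le_of_inner_le_zero hproj
  nlinarith [mul_le_mul_of_nonneg_left hsub ha, mul_le_mul_of_nonneg_left hg (sq_nonneg a)]

end Geometry

lemma mul_le_two_sub_mul_add {A a σ D L0 L1 : ℝ} (hA : 0 < A) (hL1 : 0 ≤ L1) (haA : a * A ≤ 2)
    (hσ1 : 1 ≤ σ) (hσa : σ ≤ 2 - a * L1) (hσA : 2 * A ≤ σ * (A + 2 * L1))
    (hD : 0 ≤ L0 ^ 2 + L1 * D) :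
    σ * D ≤ (2 - a * L1) * D + (2 * σ / A - a) * L0 ^ 2 := by
  have hcoef : 0 ≤ 2 * σ / A - a := by
    rw [sub_nonneg, le_div_iff₀ hA]; linarith
  rcases hL1.eq_or_lt with rfl | hL1
  · obtain rfl : σ = 2 := by nlinarith
    nlinarith [mul_nonneg hcoef (sq_nonneg L0)]
  · have hdef : 2 - a * L1 - σ ≤ (2 * σ / A - a) * L1 := by
      have : (2 * σ / A - a) * L1 - (2 - a * L1 - σ) = (σ * (A + 2 * L1) - 2 * A) / A := by
        field_simp
        ring
      linarith [div_nonneg (sub_nonneg.2 hσA) hA.le]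
    have key : L1 * ((σ - (2 - a * L1)) * D) ≤ L1 * ((2 * σ / A - a) * L0 ^ 2) := by
      nlinarith [mul_le_mul_of_nonneg_right hdef (sq_nonneg L0),
        mul_nonneg (sub_nonneg.2 hσa) hD]
    nlinarith [le_of_mul_le_mul_left key hL1]

noncomputable def stepSize (μ L1 : ℝ) (t : ℕ) : ℝ :=
  2 / (μ * ((t : ℝ) + 2) + L1 ^ 2 / (μ * ((t : ℝ) + 1)))

/-- Dividing the weights by `σ_t` leaves the coefficient `(t+1)(2 - α_t L₁)/σ_t ≥ t+1` on `Δ_t`; the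
lower bound `σ_t ≥ 2A/(A + 2L₁)`, `A = μ(t+1)`, is what lets `L₁ Δ_t ≥ -L₀²` pay for the excess. -/
noncomputable def damping (μ L1 : ℝ) (t : ℕ) : ℝ :=
  max 1 (2 * μ * ((t : ℝ) + 1) / (μ * ((t : ℝ) + 1) + 2 * L1))

noncomputable def potentialWeight (μ L1 : ℝ) (t : ℕ) : ℝ :=
  (μ ^ 2 * t * (t + 1) + L1 ^ 2) / (2 * μ * damping μ L1 t)

section StepSize

variable {μ L1 : ℝ}

lemma stepSize_eq (hμ : 0 < μ) (t : ℕ) :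
    stepSize μ L1 t = 2 * μ * (t + 1) / (μ ^ 2 * (t + 1) * (t + 2) + L1 ^ 2) := by
  unfold stepSize
  field_simp

lemma stepSize_pos (hμ : 0 < μ) (t : ℕ) : 0 < stepSize μ L1 t := by
  rw [stepSize_eq hμ]
  positivity

lemma stepSize_mul_le_one (hμ : 0 < μ) (t : ℕ) : stepSize μ L1 t * L1 ≤ 1 := by
  rw [stepSize_eq hμ, div_mul_eq_mul_div, div_le_one (by positivity)]
  nlinarith [sq_nonneg (μ * (t + 1) - L1), mul_pos hμ hμ, (t.cast_nonneg : (0 : ℝ) ≤ t)]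

lemma stepSize_mul_le_two (hμ : 0 < μ) (t : ℕ) : stepSize μ L1 t * (μ * (t + 1)) ≤ 2 := by
  rw [stepSize_eq hμ, div_mul_eq_mul_div, div_le_iff₀ (by positivity)]
  nlinarith [sq_nonneg L1, mul_pos hμ hμ, (t.cast_nonneg : (0 : ℝ) ≤ t)]

lemma one_le_damping (t : ℕ) : 1 ≤ damping μ L1 t := le_max_left _ _

lemma damping_pos (t : ℕ) : 0 < damping μ L1 t := one_pos.trans_le (one_le_damping t)

lemma damping_le_succ (hμ : 0 < μ) (hL1 : 0 ≤ L1) (t : ℕ) :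
    damping μ L1 t ≤ damping μ L1 (t + 1) := by
  unfold damping
  push_cast
  refine max_le_max le_rfl ?_
  rw [div_le_div_iff₀ (by positivity) (by positivity)]
  nlinarith [mul_nonneg (mul_nonneg hμ.le hμ.le) hL1]

lemma damping_le_two_sub (hμ : 0 < μ) (hL1 : 0 ≤ L1) (t : ℕ) :
    damping μ L1 t ≤ 2 - stepSize μ L1 t * L1 := by
  refine max_le (by linarith [stepSize_mul_le_one (L1 := L1) hμ t]) ?_
  rw [stepSize_eq hμ, div_le_iff₀ (by positivity)]
  have hq : 0 < μ ^ 2 * (t + 1) * (t + 2) + L1 ^ 2 := by positivity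
  rw [div_mul_eq_mul_div, sub_mul, div_mul_eq_mul_div, le_sub_iff_add_le, ← le_sub_iff_add_le',
    div_le_iff₀ hq]
  nlinarith [sq_nonneg (μ * (t + 1) - L1), mul_pos hμ hμ, (t.cast_nonneg : (0 : ℝ) ≤ t),
    mul_nonneg (mul_nonneg hμ.le hL1) (t.cast_nonneg : (0 : ℝ) ≤ t)]

lemma two_mul_le_damping (hμ : 0 < μ) (hL1 : 0 ≤ L1) (t : ℕ) :
    2 * (μ * (t + 1)) ≤ damping μ L1 t * (μ * (t + 1) + 2 * L1) := by
  rw [← div_le_iff₀ (by positivity), ← mul_assoc]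
  exact le_max_right _ _

lemma potentialWeight_nonneg (hμ : 0 < μ) (t : ℕ) : 0 ≤ potentialWeight μ L1 t := by
  have := damping_pos (μ := μ) (L1 := L1) t
  unfold potentialWeight
  positivity

lemma potentialWeight_zero_le (hμ : 0 < μ) : potentialWeight μ L1 0 ≤ L1 ^ 2 / (2 * μ) := by
  unfold potentialWeight
  rw [Nat.cast_zero, mul_zero, zero_mul, zero_add]
  exact div_le_div_of_nonneg_left (sq_nonneg L1) (by positivity)
    (le_mul_of_one_le_right (by positivity) (one_le_damping 0))

lemma mul_gap_le_potentialWeight_sub (hμ : 0 < μ) (hL1 : 0 ≤ L1) {t : ℕ} {D r r' L0 : ℝ}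
    (hr' : 0 ≤ r') (hD : 0 ≤ L0 ^ 2 + L1 * D)
    (hstep : stepSize μ L1 t * (2 - stepSize μ L1 t * L1) * D ≤
      (1 - μ * stepSize μ L1 t) * r - r' + stepSize μ L1 t ^ 2 * L0 ^ 2) :
    ((t : ℝ) + 1) * D ≤
      potentialWeight μ L1 t * r - potentialWeight μ L1 (t + 1) * r' + 2 * L0 ^ 2 / μ := by
  have ha := stepSize_eq (L1 := L1) hμ t
  have hc' : potentialWeight μ L1 (t + 1) =
      (μ ^ 2 * (t + 1) * (t + 2) + L1 ^ 2) / (2 * μ * damping μ L1 (t + 1)) := by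
    rw [potentialWeight]
    push_cast
    ring
  have hc : potentialWeight μ L1 t =
      (μ ^ 2 * t * (t + 1) + L1 ^ 2) / (2 * μ * damping μ L1 t) := rfl
  set a := stepSize μ L1 t
  set σ := damping μ L1 t
  have hσ : 0 < σ := damping_pos t
  have hq : 0 < μ ^ 2 * (t + 1) * (t + 2) + L1 ^ 2 := by positivity
  set γ := (μ ^ 2 * (t + 1) * (t + 2) + L1 ^ 2) / (2 * μ * σ) with hγdef
  have hγ : 0 ≤ γ := by positivity
  have hγa : γ * a = (t + 1) / σ := by
    rw [hγdef, ha]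
    field_simp
  have hγc : γ * (1 - μ * a) = potentialWeight μ L1 t := by
    rw [hγdef, ha, hc]
    field_simp
    ring
  have hγc' : potentialWeight μ L1 (t + 1) ≤ γ := by
    rw [hc']
    exact div_le_div_of_nonneg_left hq.le (by positivity)
      (mul_le_mul_of_nonneg_left (damping_le_succ hμ hL1 t) (by positivity))
  have hdamped := mul_le_two_sub_mul_add (A := μ * (t + 1)) (by positivity) hL1
    (stepSize_mul_le_two hμ t) (one_le_damping t) (damping_le_two_sub hμ hL1 t)
    (two_mul_le_damping hμ hL1 t) hD
  calc ((t : ℝ) + 1) * D = (t + 1) / σ * (σ * D) := by field_simp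
    _ ≤ (t + 1) / σ * ((2 - a * L1) * D + (2 * σ / (μ * (t + 1)) - a) * L0 ^ 2) := by
      gcongr
    _ = γ * (a * (2 - a * L1) * D) - γ * (a ^ 2 * L0 ^ 2) + 2 * L0 ^ 2 / μ := by
      have hcancel : (t + 1) / σ * (2 * σ / (μ * (t + 1))) = 2 / μ := by
        field_simp
      linear_combination (-((2 - a * L1) * D - a * L0 ^ 2)) * hγa + L0 ^ 2 * hcancel
    _ ≤ γ * ((1 - μ * a) * r - r' + a ^ 2 * L0 ^ 2) - γ * (a ^ 2 * L0 ^ 2) + 2 * L0 ^ 2 / μ := by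
      gcongr
    _ = potentialWeight μ L1 t * r - γ * r' + 2 * L0 ^ 2 / μ := by
      rw [← hγc]
      ring
    _ ≤ potentialWeight μ L1 t * r - potentialWeight μ L1 (t + 1) * r' + 2 * L0 ^ 2 / μ := by
      gcongr

lemma sum_mul_gap_le (hμ : 0 < μ) (hL1 : 0 ≤ L1) {L0 : ℝ} {Δ r : ℕ → ℝ}
    (hr : ∀ t, 0 ≤ r t) (hΔ : ∀ t, 0 ≤ L0 ^ 2 + L1 * Δ t)
    (hstep : ∀ t, stepSize μ L1 t * (2 - stepSize μ L1 t * L1) * Δ t ≤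
      (1 - μ * stepSize μ L1 t) * r t - r (t + 1) + stepSize μ L1 t ^ 2 * L0 ^ 2)
    (T : ℕ) :
    ∑ t ∈ range T, ((t : ℝ) + 1) * Δ t ≤ L1 ^ 2 / (2 * μ) * r 0 + T * (2 * L0 ^ 2 / μ) := by
  set c := potentialWeight μ L1
  calc ∑ t ∈ range T, ((t : ℝ) + 1) * Δ t
      ≤ ∑ t ∈ range T, ((c t * r t - c (t + 1) * r (t + 1)) + 2 * L0 ^ 2 / μ) :=
        sum_le_sum fun t _ ↦ mul_gap_le_potentialWeight_sub hμ hL1 (hr (t + 1)) (hΔ t) (hstep t)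
    _ = c 0 * r 0 - c T * r T + T * (2 * L0 ^ 2 / μ) := by
        rw [sum_add_distrib, sum_range_sub' (fun t ↦ c t * r t), sum_const, card_range,
          nsmul_eq_mul]
    _ ≤ L1 ^ 2 / (2 * μ) * r 0 + T * (2 * L0 ^ 2 / μ) := by
        have := mul_nonneg (potentialWeight_nonneg (L1 := L1) hμ T) (hr T)
        have := mul_le_mul_of_nonneg_right (potentialWeight_zero_le (L1 := L1) hμ) (hr 0)
        linarith

end StepSize

lemma sum_range_cast_add_one (n : ℕ) : ∑ t ∈ range n, ((t : ℝ) + 1) = n * (n + 1) / 2 := by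
  induction n with
  | zero => simp
  | succ n ih =>
    rw [sum_range_succ, ih]
    push_cast
    ring

lemma budget_le_mul_sum_range {μ τ L0 L1 R : ℝ} {T : ℕ} (hμ : 0 < μ) (hτ : 0 < τ)
    (hT0 : 8 * L0 ^ 2 / (μ * τ) ≤ T) (hTR : Real.sqrt (2 * L1 ^ 2 * R / (μ * τ)) ≤ T) :
    L1 ^ 2 / (2 * μ) * R + T * (2 * L0 ^ 2 / μ) ≤ τ * ∑ t ∈ range T, ((t : ℝ) + 1) := by
  have hμτ : 0 < μ * τ := mul_pos hμ hτ
  have hR : 2 * L1 ^ 2 * R ≤ T ^ 2 * (μ * τ) := by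
    rw [← div_le_iff₀ hμτ]
    exact (Real.sqrt_le_iff.1 hTR).2
  rw [div_le_iff₀ hμτ] at hT0
  rw [sum_range_cast_add_one]
  have hT : (0 : ℝ) ≤ T := T.cast_nonneg
  have hRterm : L1 ^ 2 / (2 * μ) * R ≤ τ * T ^ 2 / 4 := by
    rw [div_mul_eq_mul_div, div_le_iff₀ (by positivity)]
    nlinarith
  have hL0term : T * (2 * L0 ^ 2 / μ) ≤ τ * T ^ 2 / 4 := by
    rw [mul_div_assoc', div_le_iff₀ hμ]
    nlinarith [mul_le_mul_of_nonneg_left hT0 hT]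
  nlinarith

lemma sum_filter_mul_le_of_sum_mul_le {ι : Type*} {s : Finset ι} {p : ι → Prop} [DecidablePred p]
    {w f : ι → ℝ} {c : ℝ} (hw : ∀ i ∈ s, 0 ≤ w i) (hsum : ∑ i ∈ s, w i * f i ≤ c * ∑ i ∈ s, w i)
    (hp : ∀ i ∈ s, ¬p i → c ≤ f i) :
    ∑ i ∈ s with p i, w i * f i ≤ c * ∑ i ∈ s with p i, w i := by
  have hrest : 0 ≤ ∑ i ∈ s with ¬p i, w i * (f i - c) := by
    refine sum_nonneg fun i hi ↦ ?_
    rw [mem_filter] at hi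
    exact mul_nonneg (hw i hi.1) (sub_nonneg.2 (hp i hi.1 hi.2))
  have hsplit := sum_filter_add_sum_filter_not s p fun i ↦ w i * (f i - c)
  simp only [mul_sub, sum_sub_distrib, ← sum_mul] at hsplit hrest ⊢
  linarith [mul_comm c (∑ i ∈ s, w i)]

lemma ConvexOn.map_centerMass_le_of_sum_le {E ι : Type*} [AddCommGroup E] [Module ℝ E]
    {s : Set E} {f : E → ℝ} (hf : ConvexOn ℝ s f) {t : Finset ι} {w : ι → ℝ} {p : ι → E}
    {c : ℝ} (hw : ∀ i ∈ t, 0 ≤ w i) (hpos : 0 < ∑ i ∈ t, w i) (hp : ∀ i ∈ t, p i ∈ s)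
    (hc : ∑ i ∈ t, w i * f (p i) ≤ c * ∑ i ∈ t, w i) :
    f (t.centerMass w p) ≤ c :=
  calc f (t.centerMass w p) ≤ (∑ i ∈ t, w i)⁻¹ * ∑ i ∈ t, w i * f (p i) :=
        hf.map_centerMass_le hw hpos hp
    _ ≤ (∑ i ∈ t, w i)⁻¹ * (c * ∑ i ∈ t, w i) := by gcongr
    _ = c := by field_simp

theorem switching_subgradient_convergence_general {d : ℕ}
    (Z : Set (EuclideanSpace ℝ (Fin d)))
    (μ τ L0 L1 : ℝ) (hμ : 0 < μ) (hτ : 0 < τ) (hL1 : 0 ≤ L1)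
    (F G : EuclideanSpace ℝ (Fin d) → ℝ)
    (hFconv : ConvexOn ℝ Z F) (hGconv : ConvexOn ℝ Z G)
    (zs : EuclideanSpace ℝ (Fin d)) (hzs : zs ∈ Z) (hGzs : G zs ≤ 0)
    (α : ℕ → ℝ)
    (hα : ∀ t : ℕ, α t = 2 / (μ * ((t : ℝ) + 2) + L1 ^ 2 / (μ * ((t : ℝ) + 1))))
    (z ζ : ℕ → EuclideanSpace ℝ (Fin d))
    (hzmem : ∀ t, z t ∈ Z) (hGz0 : G (z 0) ≤ τ)
    (hstepF : ∀ t, G (z t) ≤ τ →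
      (∀ y ∈ Z, F y ≥ F (z t) + ⟪ζ t, y - z t⟫ + μ / 2 * ‖y - z t‖ ^ 2) ∧
      ‖ζ t‖ ^ 2 ≤ L0 ^ 2 + L1 * (F (z t) - F zs))
    (hstepG : ∀ t, τ < G (z t) →
      (∀ y ∈ Z, G y ≥ G (z t) + ⟪ζ t, y - z t⟫ + μ / 2 * ‖y - z t‖ ^ 2) ∧
      ‖ζ t‖ ^ 2 ≤ L0 ^ 2 + L1 * (G (z t) - G zs))
    (hproj : ∀ t, ∀ y ∈ Z, ⟪(z t - α t • ζ t) - z (t + 1), y - z (t + 1)⟫ ≤ 0)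
    (T : ℕ) (hT1 : 1 ≤ T)
    (hT2 : 8 * L0 ^ 2 / (μ * τ) ≤ (T : ℝ))
    (hT3 : Real.sqrt (2 * L1 ^ 2 * ‖z 0 - zs‖ ^ 2 / (μ * τ)) ≤ (T : ℝ)) :
    let I := (Finset.range T).filter (fun t => G (z t) ≤ τ)
    let zbar := (∑ t ∈ I, ((t : ℝ) + 1))⁻¹ • ∑ t ∈ I, ((t : ℝ) + 1) • z t
    0 ∈ I ∧ F zbar - F zs ≤ τ ∧ G zbar ≤ τ := by
  intro I zbar
  obtain rfl : α = stepSize μ L1 := funext hα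
  set Δ : ℕ → ℝ := fun t ↦ if G (z t) ≤ τ then F (z t) - F zs else G (z t) - G zs
  have hgap (t : ℕ) :
      Δ t + μ / 2 * ‖z t - zs‖ ^ 2 ≤ ⟪ζ t, z t - zs⟫ ∧ ‖ζ t‖ ^ 2 ≤ L0 ^ 2 + L1 * Δ t := by
    by_cases h : G (z t) ≤ τ
    · obtain ⟨hsub, hnorm⟩ := hstepF t h
      simpa only [Δ, if_pos h] using ⟨sub_add_le_inner_of_strong_subgradient (hsub zs hzs), hnorm⟩
    · obtain ⟨hsub, hnorm⟩ := hstepG t (not_le.1 h)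
      simpa only [Δ, if_neg h] using ⟨sub_add_le_inner_of_strong_subgradient (hsub zs hzs), hnorm⟩
  have hsum := sum_mul_gap_le hμ hL1 (r := fun t ↦ ‖z t - zs‖ ^ 2) (fun t ↦ sq_nonneg _)
    (fun t ↦ (sq_nonneg _).trans (hgap t).2)
    (fun t ↦ projected_step_gap_le (stepSize_pos hμ t).le (hproj t zs hzs) (hgap t).1 (hgap t).2) T
  have hI : ∑ t ∈ I, ((t : ℝ) + 1) * Δ t ≤ τ * ∑ t ∈ I, ((t : ℝ) + 1) :=
    sum_filter_mul_le_of_sum_mul_le (fun t _ ↦ by positivity)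
      (hsum.trans (budget_le_mul_sum_range hμ hτ hT2 hT3))
      (fun t _ h ↦ by simp only [Δ, if_neg h]; linarith [not_le.1 h])
  have h0 : 0 ∈ I := mem_filter.2 ⟨mem_range.2 hT1, hGz0⟩
  have hpos : 0 < ∑ t ∈ I, ((t : ℝ) + 1) := sum_pos (fun _ _ ↦ by positivity) ⟨0, h0⟩
  refine ⟨h0, ?_, ?_⟩
  · rw [sub_le_iff_le_add]
    refine hFconv.map_centerMass_le_of_sum_le (fun _ _ ↦ by positivity) hpos
      (fun t _ ↦ hzmem t) ?_
    have hΔI : ∑ t ∈ I, ((t : ℝ) + 1) * Δ t = ∑ t ∈ I, ((t : ℝ) + 1) * (F (z t) - F zs) :=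
      sum_congr rfl fun t ht ↦ by simp only [Δ, if_pos (mem_filter.1 ht).2]
    simp only [hΔI, mul_sub, sum_sub_distrib, ← sum_mul] at hI
    linarith
  · refine hGconv.map_centerMass_le_of_sum_le (fun _ _ ↦ by positivity) hpos
      (fun t _ ↦ hzmem t) ?_
    rw [mul_comm, sum_mul]
    exact sum_le_sum fun t ht ↦ mul_le_mul_of_nonneg_left (mem_filter.1 ht).2 (by positivity)

/-- Switching subgradient method convergence (Theorem 1). -/
theorem switching_subgradient_convergence {d : ℕ}
    (Z : Set (EuclideanSpace ℝ (Fin d)))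
    (hZne : Z.Nonempty) (hZcl : IsClosed Z) (hZconv : Convex ℝ Z)
    (μ τ L0 L1 : ℝ) (hμ : 0 < μ) (hτ : 0 < τ) (hL0 : 0 ≤ L0) (hL1 : 0 ≤ L1)
    (F G : EuclideanSpace ℝ (Fin d) → ℝ)
    (hFconv : ConvexOn ℝ Z F) (hGconv : ConvexOn ℝ Z G)
    (zs : EuclideanSpace ℝ (Fin d)) (hzs : zs ∈ Z) (hGzs : G zs ≤ 0)
    (α : ℕ → ℝ)
    (hα : ∀ t : ℕ, α t = 2 / (μ * ((t : ℝ) + 2) + L1 ^ 2 / (μ * ((t : ℝ) + 1))))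
    (z ζ : ℕ → EuclideanSpace ℝ (Fin d))
    (hzmem : ∀ t, z t ∈ Z) (hGz0 : G (z 0) ≤ τ)
    (hstepF : ∀ t, G (z t) ≤ τ →
      (∀ y ∈ Z, F y ≥ F (z t) + ⟪ζ t, y - z t⟫ + μ / 2 * ‖y - z t‖ ^ 2) ∧
      ‖ζ t‖ ^ 2 ≤ L0 ^ 2 + L1 * (F (z t) - F zs))
    (hstepG : ∀ t, τ < G (z t) →
      (∀ y ∈ Z, G y ≥ G (z t) + ⟪ζ t, y - z t⟫ + μ / 2 * ‖y - z t‖ ^ 2) ∧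
      ‖ζ t‖ ^ 2 ≤ L0 ^ 2 + L1 * (G (z t) - G zs))
    (hproj : ∀ t, ∀ y ∈ Z, ⟪(z t - α t • ζ t) - z (t + 1), y - z (t + 1)⟫ ≤ 0)
    (T : ℕ) (hT1 : 1 ≤ T)
    (hT2 : 8 * L0 ^ 2 / (μ * τ) ≤ (T : ℝ))
    (hT3 : Real.sqrt (2 * L1 ^ 2 * ‖z 0 - zs‖ ^ 2 / (μ * τ)) ≤ (T : ℝ)) :
    let I := (Finset.range T).filter (fun t => G (z t) ≤ τ)
    let zbar := (∑ t ∈ I, ((t : ℝ) + 1))⁻¹ • ∑ t ∈ I, ((t : ℝ) + 1) • z t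
    0 ∈ I ∧ F zbar - F zs ≤ τ ∧ G zbar ≤ τ :=
  switching_subgradient_convergence_general Z μ τ L0 L1 hμ hτ hL1 F G hFconv hGconv zs hzs hGzs α hα
    z ζ hzmem hGz0 hstepF hstepG hproj T hT1 hT2 hT3
end

section
/- Non-Lipschitz subgradient bounds for the proximal subproblem (Lemma 2). Let X ⊆ ℝ^d be convex, let M ≥ 0, ρ̂ > 0, g_lb ∈ ℝ, and let f, g : ℝ^d → ℝ be M-Lipschitz on X with g(x) ≥ g_lb for all x ∈ X. Let x_k ∈ X satisfy g(x_k) ≤ 0, define F_k(x) = f(x) + (ρ̂/2)‖x − x_k‖² and G_k(x) = g(x) + (ρ̂/2)‖x − x_k‖², and let z* ∈ X satisfy F_k(z*) ≤ F_k(x_k) and G_k(z*) ≤ 0. Set L₀² = 9M² − 6ρ̂·g_lb and L₁ = 6ρ̂. Then: (i) for every z ∈ X and every ζ ∈ ℝ^d with ‖ζ‖ ≤ M, one has ‖ζ + ρ̂(z − x_k)‖² ≤ L₀² + L₁(F_k(z) − F_k(z*)); and (ii) for every z ∈ X and every ζ ∈ ℝ^d with ‖ζ‖ ≤ M, one has ‖ζ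 + ρ̂(z − x_k)‖² ≤ L₀² + L₁(G_k(z) − G_k(z*)). -/
/-! With `v = z - x_k`, the triangle inequality gives `‖ζ + ρ̂ v‖ ≤ M + ρ̂‖v‖`, and in both cases
the gap `Δ` between the proximal function at `z` and at `z*` grows quadratically:
`ρ̂/2 ‖v‖² - M‖v‖ + g_lb ≤ Δ`. For `F_k` this follows from `F_k(z*) ≤ F_k(x_k) = f(x_k)`, the
Lipschitz bound on `f` and `g_lb ≤ g(x_k) ≤ 0`; for `G_k` from `G_k(z*) ≤ 0` and `g ≥ g_lb`.
The constants `9M²` and `6ρ̂` are chosen so that the remainder is the square `2(2M - ρ̂‖v‖)²`. -/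

section

variable {E : Type*}

theorem sq_add_mul_le_of_quadratic_growth {M ρ r c Δ : ℝ} (hρ : 0 ≤ ρ)
    (hΔ : ρ / 2 * r ^ 2 - M * r + c ≤ Δ) :
    (M + ρ * r) ^ 2 ≤ 9 * M ^ 2 - 6 * ρ * c + 6 * ρ * Δ := by
  nlinarith [sq_nonneg (2 * M - ρ * r), mul_le_mul_of_nonneg_left hΔ hρ]

theorem norm_add_smul_sq_le_of_quadratic_growth [SeminormedAddCommGroup E] [NormedSpace ℝ E]
    {ζ v : E} {M ρ c Δ : ℝ} (hζ : ‖ζ‖ ≤ M) (hρ : 0 ≤ ρ)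
    (hΔ : ρ / 2 * ‖v‖ ^ 2 - M * ‖v‖ + c ≤ Δ) :
    ‖ζ + ρ • v‖ ^ 2 ≤ 9 * M ^ 2 - 6 * ρ * c + 6 * ρ * Δ := by
  have htri : ‖ζ + ρ • v‖ ≤ M + ρ * ‖v‖ :=
    calc ‖ζ + ρ • v‖ ≤ ‖ζ‖ + ‖ρ • v‖ := norm_add_le _ _
      _ ≤ M + ρ * ‖v‖ := by rw [norm_smul, Real.norm_of_nonneg hρ]; linarith
  calc ‖ζ + ρ • v‖ ^ 2 ≤ (M + ρ * ‖v‖) ^ 2 := pow_le_pow_left₀ (norm_nonneg _) htri 2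
    _ ≤ _ := sq_add_mul_le_of_quadratic_growth hρ hΔ

theorem quadratic_growth_of_le_prox_center [SeminormedAddCommGroup E] {f F : E → ℝ}
    {ρ M : ℝ} {x z w : E} (hF : ∀ y, F y = f y + ρ / 2 * ‖y - x‖ ^ 2) (hw : F w ≤ F x)
    (hLip : |f z - f x| ≤ M * ‖z - x‖) :
    ρ / 2 * ‖z - x‖ ^ 2 - M * ‖z - x‖ ≤ F z - F w := by
  have hFx : F x = f x := by simp [hF x]
  have hf : -(M * ‖z - x‖) ≤ f z - f x := (abs_le.mp hLip).1
  linarith [hF z]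

end

theorem nonlipschitz_subgradient_bounds_general {d : ℕ}
    (X : Set (EuclideanSpace ℝ (Fin d)))
    (M ρ' glb : ℝ) (hρ' : 0 < ρ')
    (f g : EuclideanSpace ℝ (Fin d) → ℝ)
    (hfLip : ∀ x ∈ X, ∀ y ∈ X, |f x - f y| ≤ M * ‖x - y‖)
    (hglb : ∀ x ∈ X, glb ≤ g x)
    (xk : EuclideanSpace ℝ (Fin d)) (hxk : xk ∈ X) (hgxk : g xk ≤ 0)
    (Fk Gk : EuclideanSpace ℝ (Fin d) → ℝ)
    (hFk : ∀ x, Fk x = f x + ρ' / 2 * ‖x - xk‖ ^ 2)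
    (hGk : ∀ x, Gk x = g x + ρ' / 2 * ‖x - xk‖ ^ 2)
    (zs : EuclideanSpace ℝ (Fin d))
    (hFzs : Fk zs ≤ Fk xk) (hGzs : Gk zs ≤ 0)
    (L0sq L1 : ℝ) (hL0sq : L0sq = 9 * M ^ 2 - 6 * ρ' * glb) (hL1 : L1 = 6 * ρ') :
    (∀ z ∈ X, ∀ ζ : EuclideanSpace ℝ (Fin d), ‖ζ‖ ≤ M →
      ‖ζ + ρ' • (z - xk)‖ ^ 2 ≤ L0sq + L1 * (Fk z - Fk zs)) ∧
    (∀ z ∈ X, ∀ ζ : EuclideanSpace ℝ (Fin d), ‖ζ‖ ≤ M →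
      ‖ζ + ρ' • (z - xk)‖ ^ 2 ≤ L0sq + L1 * (Gk z - Gk zs)) := by
  subst hL0sq hL1
  have hglb_nonpos : glb ≤ 0 := (hglb xk hxk).trans hgxk
  refine ⟨fun z hz ζ hζ => ?_, fun z hz ζ hζ => ?_⟩
  · have hΔ := quadratic_growth_of_le_prox_center hFk hFzs (hfLip z hz xk hxk)
    have := norm_add_smul_sq_le_of_quadratic_growth (v := z - xk) (c := glb) hζ hρ'.le
      (Δ := Fk z - Fk zs) (by linarith)
    linarith
  · have hMv : 0 ≤ M * ‖z - xk‖ := mul_nonneg ((norm_nonneg ζ).trans hζ) (norm_nonneg _)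
    have hΔ : ρ' / 2 * ‖z - xk‖ ^ 2 + glb ≤ Gk z - Gk zs := by
      rw [hGk z]; linarith [hglb z hz]
    have := norm_add_smul_sq_le_of_quadratic_growth (v := z - xk) (c := glb) hζ hρ'.le
      (Δ := Gk z - Gk zs) (by linarith)
    linarith

/-- Non-Lipschitz subgradient bounds for the proximal subproblem (Lemma 2). -/
theorem nonlipschitz_subgradient_bounds {d : ℕ}
    (X : Set (EuclideanSpace ℝ (Fin d))) (hX : Convex ℝ X)
    (M ρ' glb : ℝ) (hM : 0 ≤ M) (hρ' : 0 < ρ')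
    (f g : EuclideanSpace ℝ (Fin d) → ℝ)
    (hfLip : ∀ x ∈ X, ∀ y ∈ X, |f x - f y| ≤ M * ‖x - y‖)
    (hgLip : ∀ x ∈ X, ∀ y ∈ X, |g x - g y| ≤ M * ‖x - y‖)
    (hglb : ∀ x ∈ X, glb ≤ g x)
    (xk : EuclideanSpace ℝ (Fin d)) (hxk : xk ∈ X) (hgxk : g xk ≤ 0)
    (Fk Gk : EuclideanSpace ℝ (Fin d) → ℝ)
    (hFk : ∀ x, Fk x = f x + ρ' / 2 * ‖x - xk‖ ^ 2)
    (hGk : ∀ x, Gk x = g x + ρ' / 2 * ‖x - xk‖ ^ 2)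
    (zs : EuclideanSpace ℝ (Fin d)) (hzs : zs ∈ X)
    (hFzs : Fk zs ≤ Fk xk) (hGzs : Gk zs ≤ 0)
    (L0sq L1 : ℝ) (hL0sq : L0sq = 9 * M ^ 2 - 6 * ρ' * glb) (hL1 : L1 = 6 * ρ') :
    (∀ z ∈ X, ∀ ζ : EuclideanSpace ℝ (Fin d), ‖ζ‖ ≤ M →
      ‖ζ + ρ' • (z - xk)‖ ^ 2 ≤ L0sq + L1 * (Fk z - Fk zs)) ∧
    (∀ z ∈ X, ∀ ζ : EuclideanSpace ℝ (Fin d), ‖ζ‖ ≤ M →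
      ‖ζ + ρ' • (z - xk)‖ ^ 2 ≤ L0sq + L1 * (Gk z - Gk zs)) :=
  nonlipschitz_subgradient_bounds_general X M ρ' glb hρ' f g hfLip hglb xk hxk hgxk Fk Gk hFk hGk zs
    hFzs hGzs L0sq L1 hL0sq hL1
end

section
/- Lemma 1, KKT part: near proximal points are approximate KKT points. Let X ⊆ ℝ^d be convex, let ρ̂ > 1, ε > 0, let f, g : ℝ^d → ℝ, let x_k ∈ X, and define F_k(x) = f(x) + (ρ̂/2)‖x − x_k‖² and G_k(x) = g(x) + (ρ̂/2)‖x − x_k‖². Suppose x̂ ∈ X, λ ≥ 0, vectors ζ_F, ζ_G ∈ ℝ^d, and ν ∈ N_X(x̂) satisfy ζ_F + λζ_G + ν = 0, λ·G_k(x̂) = 0, and G_k(x̂) ≤ 0. If ‖x̂ − x_k‖ ≤ ε/(ρ̂(1+λ)), then, setting ζ_f = ζ_F − ρ̂(x̂ − x_k) and ζ_g = ζ_G − ρ̂(x̂ − x_k): (i) g(x̂) ≤ 0; (ii) ‖ζ_f + λζ_g + ν‖ ≤ ε; (iii) |λ·g(x̂)| ≤ ε²; and (iv) ‖x_k − x̂‖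 ≤ ε. -/
open RealInnerProductSpace

/-!
Since `ζF + λ ζG + ν = 0`, the shifted residual is `-ρ(1 + λ)(x̂ - x_k)`, so all four bounds follow
from `ρ(1 + λ) ‖x̂ - x_k‖ ≤ ε` and `ρ(1 + λ) ≥ 1`; complementarity `λ G_k(x̂) = 0` turns `λ g(x̂)` into
`-λ (ρ/2) ‖x̂ - x_k‖²`.
-/

theorem norm_shifted_residual_of_add_eq_zero {E : Type*} [SeminormedAddCommGroup E]
    [NormedSpace ℝ E] {a b ν v : E} {ρ lam : ℝ} (h : a + lam • b + ν = 0) :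
    ‖(a - ρ • v) + lam • (b - ρ • v) + ν‖ = |ρ * (1 + lam)| * ‖v‖ := by
  have hsplit : (a - ρ • v) + lam • (b - ρ • v) + ν = (a + lam • b + ν) - (ρ * (1 + lam)) • v := by
    module
  rw [hsplit, h, zero_sub, norm_neg, norm_smul, Real.norm_eq_abs]

theorem mul_half_le_sq_mul_one_add {ρ lam : ℝ} (hρ : 1 ≤ ρ) :
    lam * (ρ / 2) ≤ (ρ * (1 + lam)) ^ 2 := by
  nlinarith [sq_nonneg (ρ * lam), sq_nonneg (ρ - 1), sq_nonneg (2 * ρ * lam + ρ - 1)]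

theorem near_proximal_is_approx_KKT_general {d : ℕ}
    (ρ' ε : ℝ) (hρ' : 1 < ρ')
    (g : EuclideanSpace ℝ (Fin d) → ℝ)
    (xk : EuclideanSpace ℝ (Fin d))
    (Gk : EuclideanSpace ℝ (Fin d) → ℝ)
    (hGk : ∀ x, Gk x = g x + ρ' / 2 * ‖x - xk‖ ^ 2)
    (xh : EuclideanSpace ℝ (Fin d))
    (lam : ℝ) (hlam : 0 ≤ lam)
    (ζF ζG ν : EuclideanSpace ℝ (Fin d))
    (heq : ζF + lam • ζG + ν = 0)
    (hcomp : lam * Gk xh = 0) (hGxh : Gk xh ≤ 0)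
    (hnear : ‖xh - xk‖ ≤ ε / (ρ' * (1 + lam))) :
    g xh ≤ 0 ∧
    ‖(ζF - ρ' • (xh - xk)) + lam • (ζG - ρ' • (xh - xk)) + ν‖ ≤ ε ∧
    |lam * g xh| ≤ ε ^ 2 ∧
    ‖xk - xh‖ ≤ ε := by
  set r := ‖xh - xk‖
  have hc : 1 ≤ ρ' * (1 + lam) := by nlinarith
  have hdist : ρ' * (1 + lam) * r ≤ ε := by
    rwa [le_div_iff₀ (by positivity), mul_comm] at hnear
  have hlam_g : lam * g xh = -(lam * (ρ' / 2) * r ^ 2) := by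
    rw [hGk] at hcomp
    linarith
  refine ⟨?_, ?_, ?_, ?_⟩
  · have hG := hGk xh
    nlinarith [sq_nonneg r]
  · rw [norm_shifted_residual_of_add_eq_zero heq, abs_of_pos (by positivity)]
    exact hdist
  · rw [hlam_g, abs_neg, abs_of_nonneg (by positivity)]
    calc lam * (ρ' / 2) * r ^ 2 ≤ (ρ' * (1 + lam)) ^ 2 * r ^ 2 := by
          gcongr
          exact mul_half_le_sq_mul_one_add hρ'.le
      _ = (ρ' * (1 + lam) * r) ^ 2 := by ring
      _ ≤ ε ^ 2 := by gcongr
  · rw [norm_sub_rev]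
    exact (le_mul_of_one_le_left (norm_nonneg _) hc).trans hdist

/-- Lemma 1, KKT part: near proximal points are approximate KKT points. -/
theorem near_proximal_is_approx_KKT {d : ℕ}
    (X : Set (EuclideanSpace ℝ (Fin d))) (hX : Convex ℝ X)
    (ρ' ε : ℝ) (hρ' : 1 < ρ') (hε : 0 < ε)
    (f g : EuclideanSpace ℝ (Fin d) → ℝ)
    (xk : EuclideanSpace ℝ (Fin d)) (hxk : xk ∈ X)
    (Fk Gk : EuclideanSpace ℝ (Fin d) → ℝ)
    (hFk : ∀ x, Fk x = f x + ρ' / 2 * ‖x - xk‖ ^ 2)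
    (hGk : ∀ x, Gk x = g x + ρ' / 2 * ‖x - xk‖ ^ 2)
    (xh : EuclideanSpace ℝ (Fin d)) (hxh : xh ∈ X)
    (lam : ℝ) (hlam : 0 ≤ lam)
    (ζF ζG ν : EuclideanSpace ℝ (Fin d))
    (hν : ∀ y ∈ X, ⟪ν, y - xh⟫ ≤ 0)
    (heq : ζF + lam • ζG + ν = 0)
    (hcomp : lam * Gk xh = 0) (hGxh : Gk xh ≤ 0)
    (hnear : ‖xh - xk‖ ≤ ε / (ρ' * (1 + lam))) :
    g xh ≤ 0 ∧
    ‖(ζF - ρ' • (xh - xk)) + lam • (ζG - ρ' • (xh - xk)) + ν‖ ≤ ε ∧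
    |lam * g xh| ≤ ε ^ 2 ∧
    ‖xk - xh‖ ≤ ε :=
  near_proximal_is_approx_KKT_general ρ' ε hρ' g xk Gk hGk xh lam hlam ζF ζG ν heq hcomp hGxh hnear
end

section
/- Proximity of near-optimal subproblem solutions to the exact proximal point. Let X ⊆ ℝ^d be convex, μ > 0, τ ≥ 0, and let F, G : ℝ^d → ℝ. Suppose x̂ ∈ X, γ₀ ≥ 0, γ ≥ 0 with γ₀ + γ = 1, ζ_F is a μ-strong subgradient of F at x̂ over X, ζ_G is a μ-strong subgradient of G at x̂ over X, ν ∈ N_X(x̂), γ₀ζ_F + γζ_G + ν = 0, and γ·G(x̂) = 0. Then every x₊ ∈ X with F(x₊) ≤ F(x̂) + τ and G(x₊) ≤ τ satisfies ‖x₊ − x̂‖ ≤ sqrt(2τ/μ). -/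
/-!
Scaling the strong-subgradient inequalities of `F` and `G` by `γ₀` and `γ` and adding them shows
that `-ν = γ₀ ζ_F + γ ζ_G` is a `μ`-strong subgradient of `γ₀ F + γ G` at `x̂`. As `ν` is normal to
`X` at `x̂`, this gives the quadratic growth `(γ₀ F + γ G)(x̂) + μ/2 ‖y - x̂‖² ≤ (γ₀ F + γ G)(y)` on `X`.
By complementarity `γ G(x̂) = 0`, a point `x₊` that is `τ`-optimal for `F` and `τ`-feasible for `G` is
`τ`-optimal for `γ₀ F + γ G`, hence `μ/2 ‖x₊ - x̂‖² ≤ τ`.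
-/

open RealInnerProductSpace

theorem norm_sub_le_sqrt_of_quadratic_growth {E : Type*} [SeminormedAddGroup E] {f : E → ℝ}
    {x y : E} {μ τ : ℝ} (hμ : 0 < μ) (hgrowth : f x + μ / 2 * ‖y - x‖ ^ 2 ≤ f y) (hy : f y ≤ f x + τ) :
    ‖y - x‖ ≤ Real.sqrt (2 * τ / μ) := by
  apply Real.le_sqrt_of_sq_le
  rw [le_div_iff₀ hμ]
  linarith

variable {E : Type*} [NormedAddCommGroup E] [InnerProductSpace ℝ E]

def HasStrongSubgradientWithin (μ : ℝ) (X : Set E) (f : E → ℝ) (x ζ : E) : Prop :=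
  ∀ y ∈ X, f y ≥ f x + ⟪ζ, y - x⟫ + μ / 2 * ‖y - x‖ ^ 2

def normalCone (X : Set E) (x : E) : Set E :=
  {ν | ∀ y ∈ X, ⟪ν, y - x⟫ ≤ 0}

namespace HasStrongSubgradientWithin

variable {μ μ' c : ℝ} {X : Set E} {f g : E → ℝ} {x ζ ξ ν : E}

theorem add (hf : HasStrongSubgradientWithin μ X f x ζ)
    (hg : HasStrongSubgradientWithin μ' X g x ξ) :
    HasStrongSubgradientWithin (μ + μ') X (f + g) x (ζ + ξ) := by
  intro y hy
  have hfy := hf y hy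
  have hgy := hg y hy
  simp only [Pi.add_apply, inner_add_left]
  linarith

theorem const_smul (hf : HasStrongSubgradientWithin μ X f x ζ) (hc : 0 ≤ c) :
    HasStrongSubgradientWithin (c * μ) X (c • f) x (c • ζ) := by
  intro y hy
  have hcfy := mul_le_mul_of_nonneg_left (hf y hy) hc
  simp only [Pi.smul_apply, smul_eq_mul, real_inner_smul_left]
  linarith

theorem add_sq_norm_le_of_neg_mem_normalCone (hf : HasStrongSubgradientWithin μ X f x (-ν))
    (hν : ν ∈ normalCone X x) {y : E} (hy : y ∈ X) :
    f x + μ / 2 * ‖y - x‖ ^ 2 ≤ f y := by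
  have hfy := hf y hy
  have hνy := hν y hy
  rw [inner_neg_left] at hfy
  linarith

end HasStrongSubgradientWithin

theorem near_optimal_close_to_proximal_point_general {d : ℕ}
    (X : Set (EuclideanSpace ℝ (Fin d)))
    (μ τ : ℝ) (hμ : 0 < μ)
    (F G : EuclideanSpace ℝ (Fin d) → ℝ)
    (xh : EuclideanSpace ℝ (Fin d))
    (γ0 γ : ℝ) (hγ0 : 0 ≤ γ0) (hγ : 0 ≤ γ) (hγsum : γ0 + γ = 1)
    (ζF ζG ν : EuclideanSpace ℝ (Fin d))
    (hζF : ∀ y ∈ X, F y ≥ F xh + ⟪ζF, y - xh⟫ + μ / 2 * ‖y - xh‖ ^ 2)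
    (hζG : ∀ y ∈ X, G y ≥ G xh + ⟪ζG, y - xh⟫ + μ / 2 * ‖y - xh‖ ^ 2)
    (hν : ∀ y ∈ X, ⟪ν, y - xh⟫ ≤ 0)
    (heq : γ0 • ζF + γ • ζG + ν = 0)
    (hcomp : γ * G xh = 0)
    (xp : EuclideanSpace ℝ (Fin d)) (hxp : xp ∈ X)
    (hFxp : F xp ≤ F xh + τ) (hGxp : G xp ≤ τ) :
    ‖xp - xh‖ ≤ Real.sqrt (2 * τ / μ) := by
  have hsub : HasStrongSubgradientWithin μ X (γ0 • F + γ • G) xh (-ν) := by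
    have hcomb := (HasStrongSubgradientWithin.const_smul hζF hγ0).add
      (HasStrongSubgradientWithin.const_smul hζG hγ)
    rwa [← add_mul, hγsum, one_mul, eq_neg_of_add_eq_zero_left heq] at hcomb
  have hnear : (γ0 • F + γ • G) xp ≤ (γ0 • F + γ • G) xh + τ := by
    have hF := mul_le_mul_of_nonneg_left hFxp hγ0
    have hG := mul_le_mul_of_nonneg_left hGxp hγ
    have hτ : γ0 * τ + γ * τ = τ := by rw [← add_mul, hγsum, one_mul]
    simp only [Pi.add_apply, Pi.smul_apply, smul_eq_mul]
    linarith
  exact norm_sub_le_sqrt_of_quadratic_growth hμ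
    (hsub.add_sq_norm_le_of_neg_mem_normalCone hν hxp) hnear

/-- Proximity of near-optimal subproblem solutions to the exact proximal point. -/
theorem near_optimal_close_to_proximal_point {d : ℕ}
    (X : Set (EuclideanSpace ℝ (Fin d))) (hX : Convex ℝ X)
    (μ τ : ℝ) (hμ : 0 < μ) (hτ : 0 ≤ τ)
    (F G : EuclideanSpace ℝ (Fin d) → ℝ)
    (xh : EuclideanSpace ℝ (Fin d)) (hxh : xh ∈ X)
    (γ0 γ : ℝ) (hγ0 : 0 ≤ γ0) (hγ : 0 ≤ γ) (hγsum : γ0 + γ = 1)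
    (ζF ζG ν : EuclideanSpace ℝ (Fin d))
    (hζF : ∀ y ∈ X, F y ≥ F xh + ⟪ζF, y - xh⟫ + μ / 2 * ‖y - xh‖ ^ 2)
    (hζG : ∀ y ∈ X, G y ≥ G xh + ⟪ζG, y - xh⟫ + μ / 2 * ‖y - xh‖ ^ 2)
    (hν : ∀ y ∈ X, ⟪ν, y - xh⟫ ≤ 0)
    (heq : γ0 • ζF + γ • ζG + ν = 0)
    (hcomp : γ * G xh = 0)
    (xp : EuclideanSpace ℝ (Fin d)) (hxp : xp ∈ X)
    (hFxp : F xp ≤ F xh + τ) (hGxp : G xp ≤ τ) :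
    ‖xp - xh‖ ≤ Real.sqrt (2 * τ / μ) :=
  near_optimal_close_to_proximal_point_general X μ τ hμ F G xh γ0 γ hγ0 hγ hγsum ζF ζG ν hζF hζG hν
    heq hcomp xp hxp hFxp hGxp
end

section
/- Lemma 4, Fritz-John version: the inexact proximal step stays feasible before an ε-FJ point is reached. Let X ⊆ ℝ^d be convex, let 0 ≤ ρ < ρ̂ with ρ̂ > 1, set μ = ρ̂ − ρ, let ε > 0, and set τ = (ρ̂ − ρ)ε²/(4ρ̂(2ρ̂ − ρ)). Let f, g : ℝ^d → ℝ, let x_k ∈ X, and define F_k(x) = f(x) + (ρ̂/2)‖x − x_k‖² and G_k(x) = g(x) + (ρ̂/2)‖x − x_k‖². Suppose x̂ ∈ X, γ₀ ≥ 0, γ ≥ 0 with γ₀ + γ = 1, ζ_F is a μ-strong subgradient of F_k at x̂ over X, ζ_G is a μ-strong subgradient of G_k at x̂ over X, ν ∈ N_X(x̂), γ₀ζ_F + γζ_G + ν = 0, and γ·G_k(x̂) = 0. If ‖x̂ − x_k‖ > ε/ρ̂, then every x₊ ∈ X with F_k(x₊) ≤ F_k(x̂) + τ and G_k(x₊) ≤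 τ satisfies g(x₊) ≤ 0. -/
/-!
Summing the two strong-subgradient inequalities with the Fritz–John weights and using
`γ₀ ζ_F + γ ζ_G = -ν` with `ν` normal to `X`, the combination `γ₀ F_k + γ G_k` grows
quadratically away from `x̂`; since `γ G_k(x̂) = 0`, the two `τ`-conditions force
`(μ/2) ‖x₊ - x̂‖² ≤ τ`. So `x₊` is close to `x̂`, hence far from `x_k`, and the proximal term
`(ρ̂/2) ‖x₊ - x_k‖²` already exceeds `τ ≥ G_k(x₊)`, leaving `g(x₊) ≤ 0`.
-/

open RealInnerProductSpace

lemma strongGrowth_of_fritzJohn {E : Type*} [NormedAddCommGroup E] [InnerProductSpace ℝ E]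
    {F G : E → ℝ} {μ γ₀ γ : ℝ} {x y ζF ζG ν : E}
    (hγ₀ : 0 ≤ γ₀) (hγ : 0 ≤ γ) (hγsum : γ₀ + γ = 1)
    (hF : F x + ⟪ζF, y - x⟫ + μ / 2 * ‖y - x‖ ^ 2 ≤ F y)
    (hG : G x + ⟪ζG, y - x⟫ + μ / 2 * ‖y - x‖ ^ 2 ≤ G y)
    (hν : ⟪ν, y - x⟫ ≤ 0) (hstat : γ₀ • ζF + γ • ζG + ν = 0) :
    γ₀ * F x + γ * G x + μ / 2 * ‖y - x‖ ^ 2 ≤ γ₀ * F y + γ * G y := by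
  have hinner : γ₀ * ⟪ζF, y - x⟫ + γ * ⟪ζG, y - x⟫ + ⟪ν, y - x⟫ = 0 := by
    simpa only [inner_add_left, real_inner_smul_left, inner_zero_left]
      using congrArg (⟪·, y - x⟫) hstat
  have hweights : (γ₀ + γ) * (μ / 2 * ‖y - x‖ ^ 2) = μ / 2 * ‖y - x‖ ^ 2 := by
    rw [hγsum, one_mul]
  linarith [mul_le_mul_of_nonneg_left hF hγ₀, mul_le_mul_of_nonneg_left hG hγ]

/-- The key estimate is `(ρ' - ρ) ε² ≤ 2 k (ε - ρ' a)²` with `k = 2ρ' - ρ`; after using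
`ρ' ε² ≥ 2 k (ρ' a)²` the difference is `k (ε - 2 ρ' a)² ≥ 0`. -/
lemma sq_le_of_close_of_far {ρ ρ' ε a c : ℝ} (hρ' : 0 < ρ') (hρρ' : ρ < ρ') (hε : 0 ≤ ε)
    (hclose : 2 * ρ' * (2 * ρ' - ρ) * a ^ 2 ≤ ε ^ 2) (hfar : ε ≤ ρ' * (a + c)) :
    (ρ' - ρ) * ε ^ 2 ≤ 2 * ρ' ^ 2 * (2 * ρ' - ρ) * c ^ 2 := by
  have hk : 0 < 2 * ρ' - ρ := by linarith
  have hρ'a : ρ' * a ≤ ε := by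
    refine abs_le_of_sq_le_sq' ?_ hε |>.2
    nlinarith [mul_nonneg (mul_nonneg hρ'.le (by linarith : (0 : ℝ) ≤ 3 * ρ' - 2 * ρ)) (sq_nonneg a)]
  have hc : (ε - ρ' * a) ^ 2 ≤ (ρ' * c) ^ 2 := pow_le_pow_left₀ (by linarith) (by linarith) 2
  nlinarith [mul_nonneg hk.le (sq_nonneg (ε - 2 * (ρ' * a))), mul_le_mul_of_nonneg_left hc hk.le]

lemma le_half_sq_norm_of_close_of_far {E : Type*} [NormedAddCommGroup E]
    {ρ ρ' ε : ℝ} {x y z : E} (hρ' : 0 < ρ') (hρρ' : ρ < ρ') (hε : 0 ≤ ε)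
    (hclose : (ρ' - ρ) / 2 * ‖x - y‖ ^ 2 ≤ (ρ' - ρ) * ε ^ 2 / (4 * ρ' * (2 * ρ' - ρ)))
    (hfar : ε / ρ' < ‖y - z‖) :
    (ρ' - ρ) * ε ^ 2 / (4 * ρ' * (2 * ρ' - ρ)) ≤ ρ' / 2 * ‖x - z‖ ^ 2 := by
  have hden : 0 < 4 * ρ' * (2 * ρ' - ρ) := by nlinarith
  have hclose' : 2 * ρ' * (2 * ρ' - ρ) * ‖x - y‖ ^ 2 ≤ ε ^ 2 := by
    rw [le_div_iff₀ hden] at hclose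
    nlinarith
  have htri : ‖y - z‖ ≤ ‖x - y‖ + ‖x - z‖ := by
    simpa only [norm_sub_rev y x] using norm_sub_le_norm_sub_add_norm_sub y x z
  have hfar' : ε ≤ ρ' * (‖x - y‖ + ‖x - z‖) := by
    rw [div_lt_iff₀ hρ'] at hfar
    nlinarith
  have key := sq_le_of_close_of_far hρ' hρρ' hε hclose' hfar'
  rw [div_le_iff₀ hden]
  linarith

theorem inexact_step_feasible_FJ_general {d : ℕ}
    (X : Set (EuclideanSpace ℝ (Fin d)))
    (ρ ρ' μ ε τ : ℝ) (hρρ' : ρ < ρ') (hρ' : 1 < ρ')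
    (hμ : μ = ρ' - ρ) (hε : 0 < ε)
    (hτ : τ = (ρ' - ρ) * ε ^ 2 / (4 * ρ' * (2 * ρ' - ρ)))
    (g : EuclideanSpace ℝ (Fin d) → ℝ)
    (xk : EuclideanSpace ℝ (Fin d))
    (Fk Gk : EuclideanSpace ℝ (Fin d) → ℝ)
    (hGk : ∀ x, Gk x = g x + ρ' / 2 * ‖x - xk‖ ^ 2)
    (xh : EuclideanSpace ℝ (Fin d))
    (γ0 γ : ℝ) (hγ0 : 0 ≤ γ0) (hγ : 0 ≤ γ) (hγsum : γ0 + γ = 1)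
    (ζF ζG ν : EuclideanSpace ℝ (Fin d))
    (hζF : ∀ y ∈ X, Fk y ≥ Fk xh + ⟪ζF, y - xh⟫ + μ / 2 * ‖y - xh‖ ^ 2)
    (hζG : ∀ y ∈ X, Gk y ≥ Gk xh + ⟪ζG, y - xh⟫ + μ / 2 * ‖y - xh‖ ^ 2)
    (hν : ∀ y ∈ X, ⟪ν, y - xh⟫ ≤ 0)
    (heq : γ0 • ζF + γ • ζG + ν = 0)
    (hcomp : γ * Gk xh = 0)
    (hfar : ε / ρ' < ‖xh - xk‖)
    (xp : EuclideanSpace ℝ (Fin d)) (hxp : xp ∈ X)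
    (hFxp : Fk xp ≤ Fk xh + τ) (hGxp : Gk xp ≤ τ) :
    g xp ≤ 0 := by
  have hgrowth := strongGrowth_of_fritzJohn hγ0 hγ hγsum (hζF xp hxp) (hζG xp hxp) (hν xp hxp) heq
  have hclose : μ / 2 * ‖xp - xh‖ ^ 2 ≤ τ := by
    have hweights : (γ0 + γ) * τ = τ := by rw [hγsum, one_mul]
    linarith [mul_le_mul_of_nonneg_left hFxp hγ0, mul_le_mul_of_nonneg_left hGxp hγ]
  subst hμ hτ
  have hprox := le_half_sq_norm_of_close_of_far (by linarith) hρρ' hε.le hclose hfar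
  linarith [hGk xp]

/-- Lemma 4, Fritz-John version: the inexact proximal step stays feasible
before an ε-FJ point is reached. -/
theorem inexact_step_feasible_FJ {d : ℕ}
    (X : Set (EuclideanSpace ℝ (Fin d))) (hX : Convex ℝ X)
    (ρ ρ' μ ε τ : ℝ) (hρ : 0 ≤ ρ) (hρρ' : ρ < ρ') (hρ' : 1 < ρ')
    (hμ : μ = ρ' - ρ) (hε : 0 < ε)
    (hτ : τ = (ρ' - ρ) * ε ^ 2 / (4 * ρ' * (2 * ρ' - ρ)))
    (f g : EuclideanSpace ℝ (Fin d) → ℝ)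
    (xk : EuclideanSpace ℝ (Fin d)) (hxk : xk ∈ X)
    (Fk Gk : EuclideanSpace ℝ (Fin d) → ℝ)
    (hFk : ∀ x, Fk x = f x + ρ' / 2 * ‖x - xk‖ ^ 2)
    (hGk : ∀ x, Gk x = g x + ρ' / 2 * ‖x - xk‖ ^ 2)
    (xh : EuclideanSpace ℝ (Fin d)) (hxh : xh ∈ X)
    (γ0 γ : ℝ) (hγ0 : 0 ≤ γ0) (hγ : 0 ≤ γ) (hγsum : γ0 + γ = 1)
    (ζF ζG ν : EuclideanSpace ℝ (Fin d))
    (hζF : ∀ y ∈ X, Fk y ≥ Fk xh + ⟪ζF, y - xh⟫ + μ / 2 * ‖y - xh‖ ^ 2)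
    (hζG : ∀ y ∈ X, Gk y ≥ Gk xh + ⟪ζG, y - xh⟫ + μ / 2 * ‖y - xh‖ ^ 2)
    (hν : ∀ y ∈ X, ⟪ν, y - xh⟫ ≤ 0)
    (heq : γ0 • ζF + γ • ζG + ν = 0)
    (hcomp : γ * Gk xh = 0)
    (hfar : ε / ρ' < ‖xh - xk‖)
    (xp : EuclideanSpace ℝ (Fin d)) (hxp : xp ∈ X)
    (hFxp : Fk xp ≤ Fk xh + τ) (hGxp : Gk xp ≤ τ) :
    g xp ≤ 0 :=
  inexact_step_feasible_FJ_general X ρ ρ' μ ε τ hρρ' hρ' hμ hε hτ g xk Fk Gk hGk xh γ0 γ hγ0 hγ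
    hγsum ζF ζG ν hζF hζG hν heq hcomp hfar xp hxp hFxp hGxp
end

section
/- Descent inequality for the inexact proximal step (Fritz-John form). Let X ⊆ ℝ^d be convex, let μ > 0, ρ̂ > 0, τ ≥ 0, let f, g : ℝ^d → ℝ, let x_k ∈ X with g(x_k) ≤ 0, and define F_k(x) = f(x) + (ρ̂/2)‖x − x_k‖² and G_k(x) = g(x) + (ρ̂/2)‖x − x_k‖². Suppose x̂ ∈ X, γ₀ ≥ 0, γ ≥ 0 with γ₀ + γ = 1, ζ_F is a μ-strong subgradient of F_k at x̂ over X, ζ_G is a μ-strong subgradient of G_k at x̂ over X, ν ∈ N_X(x̂), γ₀ζ_F + γζ_G + ν = 0, and γ·G_k(x̂) = 0. Then every x₊ ∈ X with F_k(x₊) ≤ F_k(x̂) + τ satisfies γ₀(f(x_k) − f(x₊)) ≥ (μ/2)‖x̂ − x_k‖² − γ₀τ. -/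
open RealInnerProductSpace

/-
Test the Fritz–John stationarity condition `γ₀ ζ_F + γ ζ_G + ν = 0` against the direction `x_k - x̂`:
the weighted sum of the two strong-subgradient inequalities at `x_k` loses its linear terms, leaving
`γ₀ (F_k(x_k) - F_k(x̂)) + γ (G_k(x_k) - G_k(x̂)) ≥ (μ/2)‖x_k - x̂‖²`. Complementary slackness and
the feasibility of `x_k` make the `G_k`-term nonpositive, and `F_k(x̂) ≥ f(x₊) - τ` finishes the estimate.
-/

section FritzJohn

variable {E : Type*} [NormedAddCommGroup E] [InnerProductSpace ℝ E]
  {F G : E → ℝ} {x y ζF ζG ν : E} {μ γ0 γ : ℝ}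

theorem fritzJohn_weighted_strong_subgradient_le (hγ0 : 0 ≤ γ0) (hγ : 0 ≤ γ)
    (hγsum : γ0 + γ = 1)
    (hF : F x + ⟪ζF, y - x⟫ + μ / 2 * ‖y - x‖ ^ 2 ≤ F y)
    (hG : G x + ⟪ζG, y - x⟫ + μ / 2 * ‖y - x‖ ^ 2 ≤ G y)
    (hν : ⟪ν, y - x⟫ ≤ 0) (heq : γ0 • ζF + γ • ζG + ν = 0) :
    μ / 2 * ‖y - x‖ ^ 2 ≤ γ0 * (F y - F x) + γ * (G y - G x) := by
  have hinner : γ0 * ⟪ζF, y - x⟫ + γ * ⟪ζG, y - x⟫ + ⟪ν, y - x⟫ = 0 := by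
    rw [← real_inner_smul_left, ← real_inner_smul_left, ← inner_add_left, ← inner_add_left, heq,
      inner_zero_left]
  have hmass : γ0 * (μ / 2 * ‖y - x‖ ^ 2) + γ * (μ / 2 * ‖y - x‖ ^ 2) = μ / 2 * ‖y - x‖ ^ 2 := by
    rw [← add_mul, hγsum, one_mul]
  linarith [mul_le_mul_of_nonneg_left hF hγ0, mul_le_mul_of_nonneg_left hG hγ]

theorem fritzJohn_descent_of_feasible (hγ0 : 0 ≤ γ0) (hγ : 0 ≤ γ) (hγsum : γ0 + γ = 1)
    (hF : F x + ⟪ζF, y - x⟫ + μ / 2 * ‖y - x‖ ^ 2 ≤ F y)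
    (hG : G x + ⟪ζG, y - x⟫ + μ / 2 * ‖y - x‖ ^ 2 ≤ G y)
    (hν : ⟪ν, y - x⟫ ≤ 0) (heq : γ0 • ζF + γ • ζG + ν = 0)
    (hcomp : γ * G x = 0) (hGy : G y ≤ 0) :
    μ / 2 * ‖y - x‖ ^ 2 ≤ γ0 * (F y - F x) := by
  have := fritzJohn_weighted_strong_subgradient_le hγ0 hγ hγsum hF hG hν heq
  linarith [mul_nonpos_of_nonneg_of_nonpos hγ hGy]

end FritzJohn

theorem descent_inequality_FJ_general {d : ℕ}
    (X : Set (EuclideanSpace ℝ (Fin d)))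
    (μ ρ' τ : ℝ) (hρ' : 0 < ρ')
    (f g : EuclideanSpace ℝ (Fin d) → ℝ)
    (xk : EuclideanSpace ℝ (Fin d)) (hxk : xk ∈ X) (hgxk : g xk ≤ 0)
    (Fk Gk : EuclideanSpace ℝ (Fin d) → ℝ)
    (hFk : ∀ x, Fk x = f x + ρ' / 2 * ‖x - xk‖ ^ 2)
    (hGk : ∀ x, Gk x = g x + ρ' / 2 * ‖x - xk‖ ^ 2)
    (xh : EuclideanSpace ℝ (Fin d))
    (γ0 γ : ℝ) (hγ0 : 0 ≤ γ0) (hγ : 0 ≤ γ) (hγsum : γ0 + γ = 1)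
    (ζF ζG ν : EuclideanSpace ℝ (Fin d))
    (hζF : ∀ y ∈ X, Fk y ≥ Fk xh + ⟪ζF, y - xh⟫ + μ / 2 * ‖y - xh‖ ^ 2)
    (hζG : ∀ y ∈ X, Gk y ≥ Gk xh + ⟪ζG, y - xh⟫ + μ / 2 * ‖y - xh‖ ^ 2)
    (hν : ∀ y ∈ X, ⟪ν, y - xh⟫ ≤ 0)
    (heq : γ0 • ζF + γ • ζG + ν = 0)
    (hcomp : γ * Gk xh = 0)
    (xp : EuclideanSpace ℝ (Fin d))
    (hFxp : Fk xp ≤ Fk xh + τ) :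
    γ0 * (f xk - f xp) ≥ μ / 2 * ‖xh - xk‖ ^ 2 - γ0 * τ := by
  have hFkxk : Fk xk = f xk := by simp [hFk]
  have hGkxk : Gk xk ≤ 0 := by simpa [hGk] using hgxk
  have hdescent : μ / 2 * ‖xk - xh‖ ^ 2 ≤ γ0 * (Fk xk - Fk xh) :=
    fritzJohn_descent_of_feasible hγ0 hγ hγsum (hζF xk hxk) (hζG xk hxk) (hν xk hxk) heq hcomp
      hGkxk
  have hfxp : f xp ≤ Fk xh + τ := by
    nlinarith [hFk xp, sq_nonneg ‖xp - xk‖]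
  rw [norm_sub_rev, ← hFkxk]
  linarith [mul_le_mul_of_nonneg_left hfxp hγ0]

/-- Descent inequality for the inexact proximal step (Fritz-John form). -/
theorem descent_inequality_FJ {d : ℕ}
    (X : Set (EuclideanSpace ℝ (Fin d))) (hX : Convex ℝ X)
    (μ ρ' τ : ℝ) (hμ : 0 < μ) (hρ' : 0 < ρ') (hτ : 0 ≤ τ)
    (f g : EuclideanSpace ℝ (Fin d) → ℝ)
    (xk : EuclideanSpace ℝ (Fin d)) (hxk : xk ∈ X) (hgxk : g xk ≤ 0)
    (Fk Gk : EuclideanSpace ℝ (Fin d) → ℝ)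
    (hFk : ∀ x, Fk x = f x + ρ' / 2 * ‖x - xk‖ ^ 2)
    (hGk : ∀ x, Gk x = g x + ρ' / 2 * ‖x - xk‖ ^ 2)
    (xh : EuclideanSpace ℝ (Fin d)) (hxh : xh ∈ X)
    (γ0 γ : ℝ) (hγ0 : 0 ≤ γ0) (hγ : 0 ≤ γ) (hγsum : γ0 + γ = 1)
    (ζF ζG ν : EuclideanSpace ℝ (Fin d))
    (hζF : ∀ y ∈ X, Fk y ≥ Fk xh + ⟪ζF, y - xh⟫ + μ / 2 * ‖y - xh‖ ^ 2)
    (hζG : ∀ y ∈ X, Gk y ≥ Gk xh + ⟪ζG, y - xh⟫ + μ / 2 * ‖y - xh‖ ^ 2)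
    (hν : ∀ y ∈ X, ⟪ν, y - xh⟫ ≤ 0)
    (heq : γ0 • ζF + γ • ζG + ν = 0)
    (hcomp : γ * Gk xh = 0)
    (xp : EuclideanSpace ℝ (Fin d)) (hxp : xp ∈ X)
    (hFxp : Fk xp ≤ Fk xh + τ) :
    γ0 * (f xk - f xp) ≥ μ / 2 * ‖xh - xk‖ ^ 2 - γ0 * τ :=
  descent_inequality_FJ_general X μ ρ' τ hρ' f g xk hxk hgxk Fk Gk hFk hGk xh γ0 γ hγ0 hγ hγsum ζF
    ζG ν hζF hζG hν heq hcomp xp hFxp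
end

section
/- Theorem 2 (outer-loop convergence to Fritz-John stationarity). Let X ⊆ ℝ^d be convex, let 0 ≤ ρ < ρ̂ with ρ̂ > 1, set μ = ρ̂ − ρ, let ε > 0, and set τ = (ρ̂ − ρ)ε²/(4ρ̂(2ρ̂ − ρ)). Let f, g : ℝ^d → ℝ with f(x) ≥ f_lb for all x ∈ X for some f_lb ∈ ℝ. Suppose sequences x : ℕ → X, x̂ : ℕ → X, γ₀, γ : ℕ → ℝ, ζ_F, ζ_G, ν : ℕ → ℝ^d satisfy: g(x₀) ≤ 0; and for every k ∈ ℕ, with F_k(x) = f(x) + (ρ̂/2)‖x − x_k‖² and G_k(x) = g(x) + (ρ̂/2)‖x − x_k‖²: γ₀(k) ≥ 0, γ(k) ≥ 0, γ₀(k) + γ(k) = 1; ζ_F(k) is a μ-strong subgradient of F_k at x̂_{k+1} over X; ζ_G(k) is a μ-strong subgradient of G_k at x̂_{k+1} over X; ν(k) ∈ N_X(x̂_{k+1}); γ₀(k)ζ_F(k) + γ(k)ζ_G(k) + ν(k) = 0; γ(k)·G_k(x̂_{k+1}) = 0; G_k(x̂_{k+1}) ≤ 0; F_k(x_{k+1})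 ≤ F_k(x̂_{k+1}) + τ; and G_k(x_{k+1}) ≤ τ. Then there exists K ∈ ℕ with K ≤ 4ρ̂²(f(x₀) − f_lb)/((ρ̂ − ρ)ε²) such that g(x_K) ≤ 0 and ‖x̂_{K+1} − x_K‖ ≤ ε/ρ̂ (so that x_K is an (ε, ε)-Fritz-John point of minimizing f over {x ∈ X : g(x) ≤ 0}). -/
open RealInnerProductSpace

/-! At the Fritz–John point `x̂` of the proximal subproblem, the Lagrangian `γ₀ F_k + γ G_k` grows
quadratically, at rate `μ / 2`, away from `x̂` on `X`. Evaluated at the inexact solution `x_{k+1}`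
this puts `x_{k+1}` within `√(2τ/μ)` of `x̂`; evaluated at the feasible centre `x_k` it shows that a
step with `‖x̂ - x_k‖ > ε / ρ̂` lowers `f` by `μ ε² / (4 ρ̂²)` and, `x_{k+1}` being close to `x̂`
and far from `x_k`, keeps `x_{k+1}` feasible. Since `f` is bounded below on `X`, such steps
stop after at most `(f(x₀) - f_lb) / (μ ε² / (4 ρ̂²))` iterations. -/

section StrongSubgradient

variable {E : Type*} [NormedAddCommGroup E] [InnerProductSpace ℝ E]

def IsStrongSubgradientOn (X : Set E) (h : E → ℝ) (μ : ℝ) (x ζ : E) : Prop :=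
  ∀ y ∈ X, h x + ⟪ζ, y - x⟫ + μ / 2 * ‖y - x‖ ^ 2 ≤ h y

variable {X : Set E} {F G : E → ℝ} {μ a b : ℝ} {x ζ ζF ζG ν : E}

theorem IsStrongSubgradientOn.convex_combination (hF : IsStrongSubgradientOn X F μ x ζF)
    (hG : IsStrongSubgradientOn X G μ x ζG) (ha : 0 ≤ a) (hb : 0 ≤ b) (hab : a + b = 1) :
    IsStrongSubgradientOn X (fun y ↦ a * F y + b * G y) μ x (a • ζF + b • ζG) := by
  intro y hy
  have hFy := mul_le_mul_of_nonneg_left (hF y hy) ha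
  have hGy := mul_le_mul_of_nonneg_left (hG y hy) hb
  obtain rfl : b = 1 - a := by linarith
  simp only [inner_add_left, real_inner_smul_left]
  linarith

theorem IsStrongSubgradientOn.add_sq_le_of_add_eq_zero (h : IsStrongSubgradientOn X F μ x ζ)
    (hν : ν ∈ normalCone X x) (hsum : ζ + ν = 0) :
    ∀ y ∈ X, F x + μ / 2 * ‖y - x‖ ^ 2 ≤ F y := by
  intro y hy
  have hζν : ⟪ζ, y - x⟫ + ⟪ν, y - x⟫ = 0 := by rw [← inner_add_left, hsum, inner_zero_left]
  linarith [h y hy, hν y hy]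

end StrongSubgradient

section OuterStep

variable {E : Type*} [NormedAddCommGroup E]

/-- The paper's `F_k` is `proxObjective f ρ̂ x_k`. -/
noncomputable def proxObjective (h : E → ℝ) (ρ : ℝ) (c y : E) : ℝ := h y + ρ / 2 * ‖y - c‖ ^ 2

variable {X : Set E} {F G f g : E → ℝ} {ρ μ ε τ a b : ℝ} {c z w : E}

theorem sq_dist_le_of_inexact (ha : 0 ≤ a) (hb : 0 ≤ b) (hab : a + b = 1) (hcomp : b * G z = 0)
    (hL : a * F z + b * G z + μ / 2 * ‖w - z‖ ^ 2 ≤ a * F w + b * G w)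
    (hFw : F w ≤ F z + τ) (hGw : G w ≤ τ) : μ / 2 * ‖w - z‖ ^ 2 ≤ τ := by
  have haF := mul_le_mul_of_nonneg_left hFw ha
  have hbG := mul_le_mul_of_nonneg_left hGw hb
  obtain rfl : b = 1 - a := by linarith
  linarith

theorem two_mul_lt_mul_norm_sq (hρ : 0 < ρ) (hμ : 0 < μ)
    (hτ : 4 * ρ * (ρ + μ) * τ ≤ μ * ε ^ 2) (hwz : μ / 2 * ‖w - z‖ ^ 2 ≤ τ)
    (hfar : ε ^ 2 < ρ ^ 2 * ‖z - c‖ ^ 2) : 2 * τ < ρ * ‖w - c‖ ^ 2 := by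
  have htri : ‖z - c‖ ^ 2 ≤ 2 * (‖w - c‖ ^ 2 + ‖w - z‖ ^ 2) :=
    calc ‖z - c‖ ^ 2 = ‖(w - c) - (w - z)‖ ^ 2 := by rw [sub_sub_sub_cancel_left]
      _ ≤ (‖w - c‖ + ‖w - z‖) ^ 2 := by gcongr; exact norm_sub_le _ _
      _ ≤ 2 * (‖w - c‖ ^ 2 + ‖w - z‖ ^ 2) := add_sq_le
  have h1 := mul_lt_mul_of_pos_left hfar hμ
  have h2 := mul_le_mul_of_nonneg_left htri (by positivity : 0 ≤ μ * ρ ^ 2)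
  have h3 := mul_le_mul_of_nonneg_left hwz (by positivity : 0 ≤ 4 * ρ ^ 2)
  have hkey : 2 * ρ * μ * (2 * τ) < 2 * ρ * μ * (ρ * ‖w - c‖ ^ 2) := by linarith
  exact lt_of_mul_lt_mul_left hkey (by positivity)

theorem prox_step_feasible_and_descent (hρ : 0 < ρ) (hμ : 0 < μ) (hε : 0 ≤ ε)
    (hτ : 4 * ρ * (ρ + μ) * τ ≤ μ * ε ^ 2) (ha : 0 ≤ a) (hb : 0 ≤ b) (hab : a + b = 1)
    (hL : ∀ y ∈ X, a * proxObjective f ρ c z + b * proxObjective g ρ c z + μ / 2 * ‖y - z‖ ^ 2 ≤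
      a * proxObjective f ρ c y + b * proxObjective g ρ c y)
    (hcomp : b * proxObjective g ρ c z = 0)
    (hFw : proxObjective f ρ c w ≤ proxObjective f ρ c z + τ) (hGw : proxObjective g ρ c w ≤ τ)
    (hc : c ∈ X) (hw : w ∈ X) (hgc : g c ≤ 0) (hfar : ε < ρ * ‖z - c‖) :
    g w ≤ 0 ∧ f w ≤ f c - μ * ε ^ 2 / (4 * ρ ^ 2) := by
  have hfar_sq : ε ^ 2 < ρ ^ 2 * ‖z - c‖ ^ 2 := by
    rw [← mul_pow]; exact pow_lt_pow_left₀ hfar hε two_ne_zero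
  have hwz := sq_dist_le_of_inexact ha hb hab hcomp (hL w hw) hFw hGw
  have hgap : μ / 2 * ‖z - c‖ ^ 2 ≤ a * (f c - proxObjective f ρ c z) := by
    have hLc := hL c hc
    simp only [proxObjective, sub_self, norm_zero] at hLc hcomp ⊢
    rw [norm_sub_rev c z] at hLc
    linarith [mul_nonpos_of_nonneg_of_nonpos hb hgc]
  have hgap_pos : 0 < μ / 2 * ‖z - c‖ ^ 2 := by
    have := pos_of_mul_pos_right ((sq_nonneg ε).trans_lt hfar_sq) (sq_nonneg ρ)
    positivity
  have hdecr : μ / 2 * ‖z - c‖ ^ 2 ≤ f c - proxObjective f ρ c z :=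
    hgap.trans (mul_le_of_le_one_left
      (pos_of_mul_pos_right (hgap_pos.trans_le hgap) ha).le (by linarith))
  constructor
  · have := two_mul_lt_mul_norm_sq hρ hμ hτ hwz hfar_sq
    unfold proxObjective at hGw
    linarith
  · have hfw : f w ≤ proxObjective f ρ c w := le_add_of_nonneg_right (by positivity)
    have hτ_nonneg : 0 ≤ τ := (by positivity : 0 ≤ μ / 2 * ‖w - z‖ ^ 2).trans hwz
    have h1 := mul_lt_mul_of_pos_left hfar_sq hμ
    have h2 := mul_nonneg (mul_nonneg hρ.le hμ.le) hτ_nonneg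
    have h3 := mul_le_mul_of_nonneg_left (hdecr.trans (by linarith : _ ≤ f c - f w + τ))
      (by positivity : 0 ≤ 4 * ρ ^ 2)
    rw [le_sub_comm, div_le_iff₀ (by positivity)]
    linarith

end OuterStep

theorem exists_le_div_of_decrease {P Q : ℕ → Prop} {u : ℕ → ℝ} {lb δ : ℝ} (hδ : 0 < δ)
    (hlb : ∀ n, lb ≤ u n) (h0 : P 0)
    (hstep : ∀ n, P n → ¬ Q n → P (n + 1) ∧ u (n + 1) ≤ u n - δ) :
    ∃ K : ℕ, (K : ℝ) ≤ (u 0 - lb) / δ ∧ P K ∧ Q K := by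
  by_contra! hnone
  have hdecr : ∀ n : ℕ, P n ∧ u n ≤ u 0 - n * δ := by
    intro n
    induction n with
    | zero => simpa using h0
    | succ n ih =>
      have hn : (n : ℝ) ≤ (u 0 - lb) / δ := by rw [le_div_iff₀ hδ]; linarith [hlb n, ih.2]
      obtain ⟨hP, hu⟩ := hstep n ih.1 (hnone n hn ih.1)
      exact ⟨hP, by push_cast; linarith⟩
  obtain ⟨n, hn⟩ := exists_nat_gt ((u 0 - lb) / δ)
  rw [div_lt_iff₀ hδ] at hn
  linarith [hlb n, (hdecr n).2]

theorem outer_loop_convergence_FJ_general {d : ℕ}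
    (X : Set (EuclideanSpace ℝ (Fin d)))
    (ρ ρ' μ ε τ flb : ℝ) (hρ : 0 ≤ ρ) (hρρ' : ρ < ρ')
    (hμ : μ = ρ' - ρ) (hε : 0 < ε)
    (hτ : τ = (ρ' - ρ) * ε ^ 2 / (4 * ρ' * (2 * ρ' - ρ)))
    (f g : EuclideanSpace ℝ (Fin d) → ℝ)
    (hflb : ∀ x ∈ X, flb ≤ f x)
    (x xh : ℕ → EuclideanSpace ℝ (Fin d))
    (hx : ∀ k, x k ∈ X)
    (γ0 γ : ℕ → ℝ) (ζF ζG ν : ℕ → EuclideanSpace ℝ (Fin d))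
    (hg0 : g (x 0) ≤ 0)
    (hγ0 : ∀ k, 0 ≤ γ0 k) (hγ : ∀ k, 0 ≤ γ k) (hγsum : ∀ k, γ0 k + γ k = 1)
    (hζF : ∀ k, ∀ y ∈ X,
      f y + ρ' / 2 * ‖y - x k‖ ^ 2 ≥
        (f (xh (k + 1)) + ρ' / 2 * ‖xh (k + 1) - x k‖ ^ 2)
        + ⟪ζF k, y - xh (k + 1)⟫ + μ / 2 * ‖y - xh (k + 1)‖ ^ 2)
    (hζG : ∀ k, ∀ y ∈ X,
      g y + ρ' / 2 * ‖y - x k‖ ^ 2 ≥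
        (g (xh (k + 1)) + ρ' / 2 * ‖xh (k + 1) - x k‖ ^ 2)
        + ⟪ζG k, y - xh (k + 1)⟫ + μ / 2 * ‖y - xh (k + 1)‖ ^ 2)
    (hν : ∀ k, ∀ y ∈ X, ⟪ν k, y - xh (k + 1)⟫ ≤ 0)
    (heq : ∀ k, γ0 k • ζF k + γ k • ζG k + ν k = 0)
    (hcomp : ∀ k, γ k * (g (xh (k + 1)) + ρ' / 2 * ‖xh (k + 1) - x k‖ ^ 2) = 0)
    (hFnear : ∀ k, f (x (k + 1)) + ρ' / 2 * ‖x (k + 1) - x k‖ ^ 2 ≤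
      (f (xh (k + 1)) + ρ' / 2 * ‖xh (k + 1) - x k‖ ^ 2) + τ)
    (hGnear : ∀ k, g (x (k + 1)) + ρ' / 2 * ‖x (k + 1) - x k‖ ^ 2 ≤ τ) :
    ∃ K : ℕ, (K : ℝ) ≤ 4 * ρ' ^ 2 * (f (x 0) - flb) / ((ρ' - ρ) * ε ^ 2) ∧
      g (x K) ≤ 0 ∧ ‖xh (K + 1) - x K‖ ≤ ε / ρ' := by
  have hρ'0 : 0 < ρ' := hρ.trans_lt hρρ'
  have hμ0 : 0 < μ := hμ ▸ sub_pos.2 hρρ'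
  have hτμ : 4 * ρ' * (ρ' + μ) * τ ≤ μ * ε ^ 2 := by
    rw [hτ, hμ, show ρ' + (ρ' - ρ) = 2 * ρ' - ρ by ring]
    exact (mul_div_cancel₀ _ (mul_pos (by positivity) (by linarith)).ne').le
  have hstep : ∀ k, g (x k) ≤ 0 → ¬ ‖xh (k + 1) - x k‖ ≤ ε / ρ' →
      g (x (k + 1)) ≤ 0 ∧ f (x (k + 1)) ≤ f (x k) - μ * ε ^ 2 / (4 * ρ' ^ 2) := by
    intro k hgk hfar
    have hF : IsStrongSubgradientOn X (proxObjective f ρ' (x k)) μ (xh (k + 1)) (ζF k) := hζF k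
    have hG : IsStrongSubgradientOn X (proxObjective g ρ' (x k)) μ (xh (k + 1)) (ζG k) := hζG k
    have hL := (hF.convex_combination hG (hγ0 k) (hγ k) (hγsum k)).add_sq_le_of_add_eq_zero
      (hν k) (heq k)
    rw [not_le, div_lt_iff₀' hρ'0] at hfar
    exact prox_step_feasible_and_descent hρ'0 hμ0 hε.le hτμ (hγ0 k) (hγ k) (hγsum k) hL
      (hcomp k) (hFnear k) (hGnear k) (hx k) (hx (k + 1)) hgk hfar
  obtain ⟨K, hK, hgK, hsmall⟩ :=
    exists_le_div_of_decrease (by positivity) (fun n ↦ hflb _ (hx n)) hg0 hstep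
  refine ⟨K, hK.trans_eq ?_, hgK, hsmall⟩
  rw [hμ]
  field_simp

/-- Theorem 2: outer-loop convergence to Fritz-John stationarity. -/
theorem outer_loop_convergence_FJ {d : ℕ}
    (X : Set (EuclideanSpace ℝ (Fin d))) (hX : Convex ℝ X)
    (ρ ρ' μ ε τ flb : ℝ) (hρ : 0 ≤ ρ) (hρρ' : ρ < ρ') (hρ' : 1 < ρ')
    (hμ : μ = ρ' - ρ) (hε : 0 < ε)
    (hτ : τ = (ρ' - ρ) * ε ^ 2 / (4 * ρ' * (2 * ρ' - ρ)))
    (f g : EuclideanSpace ℝ (Fin d) → ℝ)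
    (hflb : ∀ x ∈ X, flb ≤ f x)
    (x xh : ℕ → EuclideanSpace ℝ (Fin d))
    (hx : ∀ k, x k ∈ X) (hxh : ∀ k, xh k ∈ X)
    (γ0 γ : ℕ → ℝ) (ζF ζG ν : ℕ → EuclideanSpace ℝ (Fin d))
    (hg0 : g (x 0) ≤ 0)
    (hγ0 : ∀ k, 0 ≤ γ0 k) (hγ : ∀ k, 0 ≤ γ k) (hγsum : ∀ k, γ0 k + γ k = 1)
    (hζF : ∀ k, ∀ y ∈ X,
      f y + ρ' / 2 * ‖y - x k‖ ^ 2 ≥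
        (f (xh (k + 1)) + ρ' / 2 * ‖xh (k + 1) - x k‖ ^ 2)
        + ⟪ζF k, y - xh (k + 1)⟫ + μ / 2 * ‖y - xh (k + 1)‖ ^ 2)
    (hζG : ∀ k, ∀ y ∈ X,
      g y + ρ' / 2 * ‖y - x k‖ ^ 2 ≥
        (g (xh (k + 1)) + ρ' / 2 * ‖xh (k + 1) - x k‖ ^ 2)
        + ⟪ζG k, y - xh (k + 1)⟫ + μ / 2 * ‖y - xh (k + 1)‖ ^ 2)
    (hν : ∀ k, ∀ y ∈ X, ⟪ν k, y - xh (k + 1)⟫ ≤ 0)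
    (heq : ∀ k, γ0 k • ζF k + γ k • ζG k + ν k = 0)
    (hcomp : ∀ k, γ k * (g (xh (k + 1)) + ρ' / 2 * ‖xh (k + 1) - x k‖ ^ 2) = 0)
    (hGxh : ∀ k, g (xh (k + 1)) + ρ' / 2 * ‖xh (k + 1) - x k‖ ^ 2 ≤ 0)
    (hFnear : ∀ k, f (x (k + 1)) + ρ' / 2 * ‖x (k + 1) - x k‖ ^ 2 ≤
      (f (xh (k + 1)) + ρ' / 2 * ‖xh (k + 1) - x k‖ ^ 2) + τ)
    (hGnear : ∀ k, g (x (k + 1)) + ρ' / 2 * ‖x (k + 1) - x k‖ ^ 2 ≤ τ) :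
    ∃ K : ℕ, (K : ℝ) ≤ 4 * ρ' ^ 2 * (f (x 0) - flb) / ((ρ' - ρ) * ε ^ 2) ∧
      g (x K) ≤ 0 ∧ ‖xh (K + 1) - x K‖ ≤ ε / ρ' :=
  outer_loop_convergence_FJ_general X ρ ρ' μ ε τ flb hρ hρρ' hμ hε hτ f g hflb x xh hx γ0 γ ζF ζG ν
    hg0 hγ0 hγ hγsum hζF hζG hν heq hcomp hFnear hGnear
end
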